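/- Under the standing assumptions, let A be a bounded linear operator on L²(M, μ; X) and let 𝔄 : M → B(X) be a family of bounded linear operators on X such that for every F ∈ L²(M, μ; X) one has (A F)(x) = 𝔄(x)(F(x)) for μ-a.e. x. If 𝔄(x)(C) ⊆ C for μ-a.e. x, then A maps 𝒬 into 𝒬, i.e., A is positivity preserving with respect to the Hilbert cone 𝒬. -/

import Mathlib

open scoped ComplexOrder
open MeasureTheory

/-- A *Hilbert cone* in a complex Hilbert space `X`. -/
def IsHilbertCone {X : Type*} [NormedAddCommGroup X] [InnerProductSpace ℂ X]
    (C : Set X) : Prop :=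
  IsClosed C ∧ Convex ℝ C ∧
    (∀ (c : ℝ), 0 ≤ c → ∀ u ∈ C, c • u ∈ C) ∧
    (∀ u ∈ C, ∀ v ∈ C, (0 : ℂ) ≤ (inner ℂ u v : ℂ)) ∧
    (∀ w : X, ∃ u ∈ C, ∃ v ∈ C, ∃ u' ∈ C, ∃ v' ∈ C,
      w = u - v + Complex.I • (u' - v') ∧
        (inner ℂ u v : ℂ) = 0 ∧ (inner ℂ u' v' : ℂ) = 0)

/-- The conical hull of a set: all finite sums with nonnegative real coefficients. -/
def conicalCombinations {V : Type*} [AddCommMonoid V] [Module ℝ V] (s : Set V) : Set V :=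
  {v | ∃ (k : ℕ) (a : Fin k → ℝ) (x : Fin k → V),
    (∀ i, 0 ≤ a i) ∧ (∀ i, x i ∈ s) ∧ v = ∑ i, a i • x i}

/-!
A function `G ∈ L²(M; X)` with values a.e. in `C` lies in `𝒬`: the simple functions
`SimpleFunc.approxOn` with values in `C` converge to `G` in `L²`, and a simple function with
values in `C` is a finite sum of indicators `x ↦ 1_s(x) • c` with `c ∈ C`, which are generators
of `𝒬`. For a generator `G = f • φ` one has `(A G)(x) = f(x) • 𝔄(x) φ ∈ C` a.e., so
`A G ∈ 𝒬`. As `A` is continuous and real-linear and `𝒬` is a closed convex cone, `A 𝒬 ⊆ 𝒬`.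
-/
open scoped ENNReal NNReal Topology
open Filter TopologicalSpace

section ConicalCombinations

variable {V W : Type*} [AddCommGroup V] [Module ℝ V] [AddCommGroup W] [Module ℝ W]

theorem conicalCombinations_eq_hull (s : Set V) :
    conicalCombinations s = PointedCone.hull ℝ s := by
  ext v
  rw [SetLike.mem_coe, Submodule.mem_span_set']
  constructor
  · rintro ⟨k, a, x, ha, hx, rfl⟩
    exact ⟨k, fun i => ⟨a i, ha i⟩, fun i => ⟨x i, hx i⟩, rfl⟩
  · rintro ⟨k, a, x, rfl⟩
    exact ⟨k, fun i => a i, fun i => x i, fun i => (a i).2, fun i => (x i).2, rfl⟩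

variable [TopologicalSpace V] [TopologicalSpace W]

theorem image_closure_hull_subset (T : V →L[ℝ] W) (s : Set V) :
    T '' closure (PointedCone.hull ℝ s) ⊆ closure (PointedCone.hull ℝ (T '' s)) := by
  refine (image_closure_subset_closure_image T.continuous).trans (closure_mono ?_)
  rintro _ ⟨v, hv, rfl⟩
  have : PointedCone.hull ℝ s ≤ (PointedCone.hull ℝ (T '' s)).comap T.toLinearMap :=
    Submodule.span_le.2 fun x hx => Submodule.subset_span (Set.mem_image_of_mem T hx)
  exact this hv

theorem closure_hull_subset_closure_hull [ContinuousAdd V] [ContinuousConstSMul ℝ V]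
    {s t : Set V} (h : s ⊆ closure (PointedCone.hull ℝ t)) :
    closure (PointedCone.hull ℝ s : Set V) ⊆ closure (PointedCone.hull ℝ t) :=
  closure_minimal (Submodule.span_le.2 h : _ ≤ (PointedCone.hull ℝ t).closure) isClosed_closure

end ConicalCombinations

namespace MeasureTheory

variable {α E : Type*} [MeasurableSpace α] [NormedAddCommGroup E]

def indicatorConstLpSet (p : ℝ≥0∞) (μ : Measure α) (C : Set E) : Set (Lp E p μ) :=
  {F | ∃ (s : Set α) (hs : MeasurableSet s) (hμs : μ s ≠ ∞), ∃ c ∈ C,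
    F = indicatorConstLp p hs hμs c}

variable {μ : Measure α} {p : ℝ≥0∞}

section Indicator

variable {s : Set α} (hs : MeasurableSet s) (hμs : μ s ≠ ∞)

theorem ae_nonneg_indicatorConstLp [PartialOrder E] {c : E} (hc : 0 ≤ c) :
    ∀ᵐ x ∂μ, 0 ≤ indicatorConstLp p hs hμs c x := by
  filter_upwards [indicatorConstLp_coeFn (p := p) (hs := hs) (hμs := hμs) (c := c)] with x hx
  exact hx ▸ Set.indicator_nonneg (fun _ _ => hc) x

theorem indicatorConstLp_ae_eq_smul {𝕜 : Type*} [NormedRing 𝕜] [Module 𝕜 E] (c : E) :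
    ∀ᵐ x ∂μ, indicatorConstLp p hs hμs c x = indicatorConstLp p hs hμs (1 : 𝕜) x • c := by
  filter_upwards [indicatorConstLp_coeFn (p := p) (hs := hs) (hμs := hμs) (c := c),
    indicatorConstLp_coeFn (p := p) (hs := hs) (hμs := hμs) (c := (1 : 𝕜))] with x hc h1
  rw [hc, h1]
  by_cases hx : x ∈ s <;> simp [hx]

end Indicator

variable [NormedSpace ℝ E] {C : Set E}

theorem SimpleFunc.toLp_mem_hull_indicatorConstLpSet (hp₀ : p ≠ 0) (hp : p ≠ ∞)
    (h₀ : (0 : E) ∈ C) (ψ : SimpleFunc α E) (hψC : ∀ x, ψ x ∈ C) (hψ : MemLp ψ p μ) :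
    hψ.toLp ψ ∈ PointedCone.hull ℝ (indicatorConstLpSet p μ C) := by
  induction ψ using SimpleFunc.induction with
  | @const c s hs =>
    have hψs : ⇑(piecewise s hs (const α c) (const α 0)) = s.indicator fun _ => c := by
      simp only [const_zero, coe_piecewise, coe_const, coe_zero, Set.piecewise_eq_indicator]
      rfl
    by_cases hcs : c = 0 ∨ s = ∅
    · have hψ0 : ⇑(piecewise s hs (const α c) (const α 0)) = 0 := by
        rcases hcs with rfl | rfl <;> simp
      rw [MemLp.toLp_congr hψ MemLp.zero (by rw [hψ0]), MemLp.toLp_zero]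
      exact zero_mem _
    obtain ⟨hc, hs₀⟩ := not_or.1 hcs
    obtain ⟨x, hx⟩ := Set.nonempty_iff_ne_empty.2 hs₀
    have hcC : c ∈ C := by simpa [hψs, hx] using hψC x
    have hμs := measure_lt_top_of_memLp_indicator hp₀ hp hc hs hψ
    exact Submodule.subset_span ⟨s, hs, hμs.ne, c, hcC, MemLp.toLp_congr _ _ (by rw [hψs])⟩
  | @add f g hfg hf hg =>
    rw [coe_add] at hψC
    obtain ⟨hf', hg'⟩ :=
      (memLp_add_of_disjoint hfg f.stronglyMeasurable g.stronglyMeasurable).1 (coe_add f g ▸ hψ)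
    have hfC (x : α) : f x ∈ C := by
      by_cases hgx : g x = 0
      · simpa [hgx] using hψC x
      · simpa [Function.notMem_support.1 (Set.disjoint_right.1 hfg hgx)] using h₀
    have hgC (x : α) : g x ∈ C := by
      by_cases hfx : f x = 0
      · simpa [hfx] using hψC x
      · simpa [Function.notMem_support.1 (Set.disjoint_left.1 hfg hfx)] using h₀
    rw [MemLp.toLp_congr hψ (hf'.add hg') (EventuallyEq.of_eq (coe_add f g)),
      MemLp.toLp_add hf' hg']
    exact add_mem (hf hfC hf') (hg hgC hg')

theorem Lp.mem_closure_hull_indicatorConstLpSet [Fact (1 ≤ p)] (hp : p ≠ ∞)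
    (h₀ : (0 : E) ∈ C) {F : Lp E p μ} (hF : ∀ᵐ x ∂μ, F x ∈ C) :
    F ∈ closure (PointedCone.hull ℝ (indicatorConstLpSet p μ C) : Set (Lp E p μ)) := by
  borelize E
  -- `C` need not be separable, but the range of the strongly measurable `F` is
  set s := C ∩ (Set.range F ∪ {0})
  have h₀s : (0 : E) ∈ s := ⟨h₀, Or.inr rfl⟩
  have : SeparableSpace s :=
    (((Lp.stronglyMeasurable F).isSeparable_range.union
      (Set.finite_singleton _).isSeparable).mono Set.inter_subset_right).separableSpace
  have hFm : Measurable F := (Lp.stronglyMeasurable F).measurable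
  set ψ := SimpleFunc.approxOn F hFm s 0 h₀s
  have hψ (n : ℕ) : MemLp (ψ n) p μ := SimpleFunc.memLp_approxOn hFm (Lp.memLp F) h₀s .zero' n
  have hψF : Tendsto (fun n => (hψ n).toLp (ψ n)) atTop (𝓝 F) := by
    rw [Lp.tendsto_Lp_iff_tendsto_eLpNorm']
    refine (SimpleFunc.tendsto_approxOn_Lp_eLpNorm hFm h₀s hp ?_ ?_).congr fun n =>
      eLpNorm_congr_ae ((hψ n).coeFn_toLp.sub .rfl).symm
    · filter_upwards [hF] with x hx using subset_closure ⟨hx, Or.inl ⟨x, rfl⟩⟩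
    · simpa using (Lp.memLp F).eLpNorm_lt_top
  refine isClosed_closure.mem_of_tendsto hψF (Eventually.of_forall fun n => subset_closure ?_)
  exact SimpleFunc.toLp_mem_hull_indicatorConstLpSet (zero_lt_one.trans_le Fact.out).ne' hp h₀
    (ψ n) (fun x => (SimpleFunc.approxOn_mem hFm h₀s n x).1) (hψ n)

end MeasureTheory

namespace IsHilbertCone

variable {X : Type*} [NormedAddCommGroup X] [InnerProductSpace ℂ X] {C : Set X}

theorem zero_mem (hC : IsHilbertCone C) : (0 : X) ∈ C := by
  obtain ⟨u, hu, -⟩ := hC.2.2.2.2 0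
  simpa using hC.2.2.1 0 le_rfl u hu

theorem smul_mem_of_nonneg (hC : IsHilbertCone C) {z : ℂ} (hz : 0 ≤ z) {u : X} (hu : u ∈ C) :
    z • u ∈ C := by
  obtain ⟨r, hr, rfl⟩ := RCLike.nonneg_iff_exists_ofReal.1 hz
  exact RCLike.real_smul_eq_coe_smul (K := ℂ) r u ▸ hC.2.2.1 r hr u hu

end IsHilbertCone

theorem decomposable_posPreserving_general
    {M : Type*} [MeasurableSpace M] (μ : Measure M)
    {X : Type*} [NormedAddCommGroup X] [InnerProductSpace ℂ X]
    (C : Set X) (hC : IsHilbertCone C)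
    (A : Lp X 2 μ →L[ℂ] Lp X 2 μ) (𝔄 : M → (X →L[ℂ] X))
    (hfib : ∀ F : Lp X 2 μ, ∀ᵐ x ∂μ, A F x = 𝔄 x (F x))
    (hpos : ∀ᵐ x ∂μ, ∀ u ∈ C, 𝔄 x u ∈ C) :
    ∀ F ∈ closure (conicalCombinations
      {G : Lp X 2 μ | ∃ φ ∈ C, ∃ f : Lp ℂ 2 μ,
        (∀ᵐ x ∂μ, (0 : ℂ) ≤ f x) ∧ (∀ᵐ x ∂μ, G x = f x • φ)}),
      A F ∈ closure (conicalCombinations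
        {G : Lp X 2 μ | ∃ φ ∈ C, ∃ f : Lp ℂ 2 μ,
          (∀ᵐ x ∂μ, (0 : ℂ) ≤ f x) ∧ (∀ᵐ x ∂μ, G x = f x • φ)}) := by
  set S := {G : Lp X 2 μ | ∃ φ ∈ C, ∃ f : Lp ℂ 2 μ,
    (∀ᵐ x ∂μ, (0 : ℂ) ≤ f x) ∧ (∀ᵐ x ∂μ, G x = f x • φ)}
  simp only [conicalCombinations_eq_hull]
  have hindS : indicatorConstLpSet 2 μ C ⊆ S := by
    rintro _ ⟨s, hs, hμs, c, hc, rfl⟩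
    exact ⟨c, hc, indicatorConstLp 2 hs hμs 1, ae_nonneg_indicatorConstLp hs hμs zero_le_one,
      indicatorConstLp_ae_eq_smul hs hμs c⟩
  have hAC : ∀ G ∈ S, ∀ᵐ x ∂μ, A G x ∈ C := by
    rintro G ⟨φ, hφ, f, hf, hGf⟩
    filter_upwards [hfib G, hf, hGf, hpos] with x hAx hfx hGx hposx
    rw [hAx, hGx, map_smul]
    exact hC.smul_mem_of_nonneg hfx (hposx φ hφ)
  have hAQ : A.restrictScalars ℝ '' S ⊆ closure (PointedCone.hull ℝ S) := by
    rintro _ ⟨G, hG, rfl⟩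
    exact closure_hull_subset_closure_hull
      (hindS.trans (Submodule.subset_span.trans subset_closure))
      (Lp.mem_closure_hull_indicatorConstLpSet ENNReal.ofNat_ne_top hC.zero_mem (hAC G hG))
  intro F hF
  exact closure_hull_subset_closure_hull hAQ
    (image_closure_hull_subset (A.restrictScalars ℝ) S ⟨F, hF, rfl⟩)

theorem decomposable_posPreserving
    {M : Type*} [MeasurableSpace M] (μ : Measure M) [SigmaFinite μ]
    [TopologicalSpace.SeparableSpace (Lp ℂ 2 μ)]
    {X : Type*} [NormedAddCommGroup X] [InnerProductSpace ℂ X] [CompleteSpace X]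
    [TopologicalSpace.SeparableSpace X]
    (C : Set X) (hC : IsHilbertCone C)
    (A : Lp X 2 μ →L[ℂ] Lp X 2 μ) (𝔄 : M → (X →L[ℂ] X))
    (hfib : ∀ F : Lp X 2 μ, ∀ᵐ x ∂μ, A F x = 𝔄 x (F x))
    (hpos : ∀ᵐ x ∂μ, ∀ u ∈ C, 𝔄 x u ∈ C) :
    ∀ F ∈ closure (conicalCombinations
      {G : Lp X 2 μ | ∃ φ ∈ C, ∃ f : Lp ℂ 2 μ,
        (∀ᵐ x ∂μ, (0 : ℂ) ≤ f x) ∧ (∀ᵐ x ∂μ, G x = f x • φ)}),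
      A F ∈ closure (conicalCombinations
        {G : Lp X 2 μ | ∃ φ ∈ C, ∃ f : Lp ℂ 2 μ,
          (∀ᵐ x ∂μ, (0 : ℂ) ≤ f x) ∧ (∀ᵐ x ∂μ, G x = f x • φ)}) :=
  decomposable_posPreserving_general μ C hC A 𝔄 hfib hpos
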